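/- Let $\eta \in (0,1]$, $C > 0$, $\epsilon_0 \ge 0$, and let $(H_t)_{t \ge 0}$ be a sequence of nonnegative reals with $H_0 = \epsilon_0$ such that for every $t \ge 0$ and every $\gamma \in [0,1]$, $H_{t+1} \le H_t(1 - \eta\gamma) + \tfrac{\gamma^2}{2}\eta C$. Then for all $t \ge 0$, $H_t \le \dfrac{2(C + \epsilon_0)}{\eta t + 2}$. -/
import Mathlib


/-- the abstract Randomized Frank-Wolfe recursion implies the
`O(1/t)` rate `H_t ≤ 2(C+ε₀)/(ηt+2)`. -/
theorem stmt3 (η C ε₀ : ℝ) (hη : η ∈ Set.Ioc (0:ℝ) 1) (hC : 0 < C) (hε : 0 ≤ ε₀)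
    (H : ℕ → ℝ) (hpos : ∀ t, 0 ≤ H t) (h0 : H 0 = ε₀)
    (hrec : ∀ t : ℕ, ∀ γ ∈ Set.Icc (0:ℝ) 1,
      H (t + 1) ≤ H t * (1 - η * γ) + γ ^ 2 / 2 * η * C) :
    ∀ t : ℕ, H t ≤ 2 * (C + ε₀) / (η * t + 2) := by
  obtain ⟨hη0, hη1⟩ := hη
  intro t
  induction t with
  | zero =>
    rw [h0]
    push_cast
    rw [le_div_iff₀ (by norm_num)]
    nlinarith
  | succ t ih =>
    have htn : (0:ℝ) ≤ (t:ℝ) := Nat.cast_nonneg t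
    have hs : (0:ℝ) < η * t + 2 := by positivity
    have hγmem : (2 / (η * t + 2)) ∈ Set.Icc (0:ℝ) 1 := by
      constructor
      · positivity
      · rw [div_le_one hs]; nlinarith
    have h1 := hrec t _ hγmem
    have hcoef : 0 ≤ 1 - η * (2 / (η * t + 2)) := by
      have : η * (2 / (η * t + 2)) ≤ 1 := by
        rw [mul_div_assoc']
        rw [div_le_one hs]
        nlinarith
      linarith
    have h2 : H t * (1 - η * (2 / (η * t + 2))) ≤
        (2 * (C + ε₀) / (η * t + 2)) * (1 - η * (2 / (η * t + 2))) :=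
      mul_le_mul_of_nonneg_right ih hcoef
    have hgoal : (2 * (C + ε₀) / (η * t + 2)) * (1 - η * (2 / (η * t + 2)))
        + (2 / (η * t + 2)) ^ 2 / 2 * η * C ≤ 2 * (C + ε₀) / (η * (t + 1) + 2) := by
      have hs' : (0:ℝ) < η * (t + 1) + 2 := by positivity
      have key : 2 * (C + ε₀) / (η * t + 2) * (1 - η * (2 / (η * t + 2)))
          + (2 / (η * t + 2)) ^ 2 / 2 * η * C
          = (2 * (C + ε₀) * (η * t + 2 - η) + 2 * η * (C - (C + ε₀)))
            / (η * t + 2) ^ 2 := by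
        field_simp
        ring
      rw [key, div_le_div_iff₀ (by positivity) hs']
      nlinarith [mul_nonneg (by positivity : (0:ℝ) ≤ C + ε₀) (sq_nonneg η),
        mul_nonneg hε (by positivity : (0:ℝ) ≤ η * (η * t + 2 + η))]
    have hcast : ((t + 1 : ℕ) : ℝ) = (t : ℝ) + 1 := by push_cast; ring
    calc H (t + 1) ≤ _ := h1
      _ ≤ _ := by rw [hcast]; linarith [hgoal, h2]
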